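/- (Step 3 estimate of the parabolic maximum principle.) Let a be a deterministic balanced time-dependent environment with jump range U, let 𝒟 ⊂ ℤ^d × ℤ be finite with parabolic boundary 𝒟^p, and let u : 𝒟 ∪ 𝒟^p → ℝ. Assume ε_a(x,n) > 0 for all (x,n) ∈ 𝒟. Then there is a constant C = C(d) such that for every x ∈ ℤ^d, the Lebesgue measure of χ(Γ⁺,x) := ⋃_{n : (x,n) ∈ Γ⁺} χ(x,n) satisfies |χ(Γ⁺,x)| ≤ C (#U)^d ∑_{n : (x,n) ∈ Γ⁺} ( max(−ℒ_a u(x,n), 0) / ε_a(x,n) )^{d+1}. -/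

import Mathlib

/-!
For `(x, n) ∈ 𝒟` and a slope `q ∈ I_u(x, n)`, every neighbour `(x + z, n + 1)` lies in `𝒟 ∪ 𝒟^p`,
so the slacks `u(x, n) - u(x + z, n + 1) + q · z` are nonnegative, and by the balance condition
`-ℒ_a u(x, n) = ∑_z a_n(x, z) · slack_z` whatever `q` is. With `M = max (-ℒ_a u(x, n)) 0`, the
term `z = 0` bounds the time length of `χ(x, n)` by `M / a_n(x, 0)`, and comparing two slopes bounds
`|(q - q₀) · a_n(x, z) z|` by `#U · M`: `I_u(x, n)` lies in an intersection of slabs normal to the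
points of `U_{x,n}`. Taking `d` of these points with maximal determinant gives
`|conv U_{x,n}| · |I_u(x, n)| ≤ (4 #U M)^d`. As `χ(x, n)` is a sheared product of `I_u(x, n)` with
the time interval, `|χ(x, n)| ≤ 4^d (#U)^d (M / ε_a(x, n))^{d+1}`; summing over `n` gives the claim
with `C = 4^d`.
-/

open MeasureTheory

namespace ParabolicMaxStep3

abbrev Zd (d : ℕ) := Fin d → ℤ

/-- A (deterministic) time-dependent environment. -/
abbrev TEnv (d : ℕ) := ℕ → Zd d → Zd d → ℝ

/-- `a` is a balanced time-dependent environment with jump range `U`. -/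
def IsBalancedEnv (d : ℕ) (U : Finset (Zd d)) (a : TEnv d) : Prop :=
  ∀ n x, (∀ z ∈ U, 0 < a n x z) ∧ (∀ z, z ∉ U → a n x z = 0) ∧
    (∑ z ∈ U, a n x z = 1) ∧ (∀ i, ∑ z ∈ U, (z i : ℝ) * a n x z = 0)

/-- The parabolic boundary `𝒟^p`. -/
def pBoundary (d : ℕ) (a : TEnv d) (D : Finset (Zd d × ℕ)) : Set (Zd d × ℕ) :=
  {q | q ∉ D ∧ ∃ x n, (x, n) ∈ D ∧ q.2 = n + 1 ∧ 0 < a n x (q.1 - x)}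

/-- The parabolic difference operator `ℒ_a`. -/
def Lop (d : ℕ) (U : Finset (Zd d)) (a : TEnv d) (u : Zd d × ℕ → ℝ) (p : Zd d × ℕ) : ℝ :=
  (∑ z ∈ U, a p.2 p.1 z * u (p.1 + z, p.2 + 1)) - u p

/-- The set `U_{x,n} = {a_n(x,z) z : z ∈ U} ⊂ ℝ^d`. -/
def Uxn (d : ℕ) (U : Finset (Zd d)) (a : TEnv d) (p : Zd d × ℕ) : Set (Fin d → ℝ) :=
  (fun z : Zd d => fun i => a p.2 p.1 z * (z i : ℝ)) '' (U : Set (Zd d))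

/-- `ε_a(x,n) = (a_n(x,0) |conv U_{x,n}| / #U)^{1/(d+1)}`. -/
noncomputable def epsA (d : ℕ) (U : Finset (Zd d)) (a : TEnv d) (p : Zd d × ℕ) : ℝ :=
  (a p.2 p.1 0 * (volume (convexHull ℝ (Uxn d U a p))).toReal / U.card) ^ ((1 : ℝ) / (d + 1))

/-- `I_u(x,n)`. -/
def Iset (d : ℕ) (a : TEnv d) (D : Finset (Zd d × ℕ)) (u : Zd d × ℕ → ℝ)
    (p : Zd d × ℕ) : Set (Fin d → ℝ) :=
  {q | ∀ r ∈ (D : Set (Zd d × ℕ)) ∪ pBoundary d a D, p.2 < r.2 →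
    ∑ i, q i * ((p.1 i - r.1 i : ℤ) : ℝ) ≤ u p - u r}

/-- The upper contact set `Γ⁺` (for the radius `R`). -/
def GammaPlus (d : ℕ) (a : TEnv d) (D : Finset (Zd d × ℕ)) (u : Zd d × ℕ → ℝ) (R : ℝ) :
    Set (Zd d × ℕ) :=
  {p | p ∈ D ∧ ∃ q ∈ Iset d a D u p,
    R * Real.sqrt (∑ i, q i ^ 2) < u p - ∑ i, q i * (p.1 i : ℝ)}

/-- `χ(x,n) = {(p, q − x·p) : p ∈ I_u(x,n), q ∈ [u(x,n+1), u(x,n)]} ⊂ ℝ^{d+1}`. -/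
def chi (d : ℕ) (a : TEnv d) (D : Finset (Zd d × ℕ)) (u : Zd d × ℕ → ℝ)
    (p : Zd d × ℕ) : Set ((Fin d → ℝ) × ℝ) :=
  {w | ∃ q ∈ Iset d a D u p, ∃ s ∈ Set.Icc (u (p.1, p.2 + 1)) (u p),
    w = (q, s - ∑ i, (p.1 i : ℝ) * q i)}

open Matrix Set

theorem exists_rows_mem_det_ne_zero {d : ℕ} {s : Set (Fin d → ℝ)}
    (hs : Submodule.span ℝ s = ⊤) :
    ∃ B : Matrix (Fin d) (Fin d) ℝ, (∀ j, B j ∈ s) ∧ B.det ≠ 0 := by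
  let b := Module.Basis.ofSpan hs.ge
  let b' := b.reindex (b.indexEquiv (Pi.basisFun ℝ (Fin d)))
  refine ⟨Matrix.of b', fun j => Module.Basis.ofSpan_subset hs.ge ⟨_, (b.reindex_apply _ j).symm⟩,
    ?_⟩
  exact ((isUnit_iff_isUnit_det _).mp
    (linearIndependent_rows_iff_isUnit.mp b'.linearIndependent)).ne_zero

/-- Rows chosen from `s` with maximal `|det|` work: by Cramer's rule each coordinate of a point of
`s` is a ratio of two such determinants. -/
theorem exists_rows_mem_subset_image_cube {d : ℕ} (s : Finset (Fin d → ℝ))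
    (hs : Submodule.span ℝ (s : Set (Fin d → ℝ)) = ⊤) :
    ∃ B : Matrix (Fin d) (Fin d) ℝ, (∀ j, B j ∈ s) ∧ B.det ≠ 0 ∧
      (s : Set (Fin d → ℝ)) ⊆ toLin' Bᵀ '' Icc (-1) 1 := by
  classical
  obtain ⟨B₀, hB₀s, hB₀⟩ := exists_rows_mem_det_ne_zero hs
  let rows : (Fin d → s) → Matrix (Fin d) (Fin d) ℝ := fun f => Matrix.of fun j => (f j : Fin d → ℝ)
  obtain ⟨f, -, hf⟩ := Finset.exists_max_image Finset.univ (fun f => |(rows f).det|)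
    ⟨fun j => ⟨B₀ j, hB₀s j⟩, Finset.mem_univ _⟩
  have hf0 : (rows f).det ≠ 0 := by
    intro h
    have := hf (fun j => ⟨B₀ j, hB₀s j⟩) (Finset.mem_univ _)
    rw [h, abs_zero] at this
    exact hB₀ (abs_nonpos_iff.mp this)
  refine ⟨rows f, fun j => (f j).2, hf0, fun y hy => ⟨(rows f).det⁻¹ • cramer (rows f)ᵀ y, ?_, ?_⟩⟩
  · have hcoeff : ∀ j, |((rows f).det⁻¹ • cramer (rows f)ᵀ y) j| ≤ 1 := by
      intro j
      have hupd : (rows f).updateRow j y = rows (Function.update f j ⟨y, hy⟩) := by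
        ext i k
        by_cases h : i = j <;> simp [rows, updateRow_apply, h]
      rw [Pi.smul_apply, smul_eq_mul, abs_mul, abs_inv, inv_mul_le_iff₀ (abs_pos.mpr hf0), mul_one,
        cramer_transpose_apply, hupd]
      exact hf _ (Finset.mem_univ _)
    exact ⟨fun j => (abs_le.mp (hcoeff j)).1, fun j => (abs_le.mp (hcoeff j)).2⟩
  · rw [toLin'_apply, mulVec_smul, mulVec_cramer, det_transpose, smul_smul, inv_mul_cancel₀ hf0,
      one_smul]

/-- Both volumes are governed by `|det B|` for the rows `B` of
`exists_rows_mem_subset_image_cube`: `conv s ⊆ Bᵀ [-1, 1]^d`, and the slabs lie in the preimage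
under `B` of a box of side `2 r`. -/
theorem volume_convexHull_mul_volume_slabs_le {d : ℕ} (s : Finset (Fin d → ℝ))
    (c : (Fin d → ℝ) → ℝ) {r : ℝ} (hr : 0 ≤ r) :
    volume (convexHull ℝ (s : Set (Fin d → ℝ))) * volume {q | ∀ y ∈ s, |q ⬝ᵥ y - c y| ≤ r} ≤
      ENNReal.ofReal ((4 * r) ^ d) := by
  by_cases hs : Submodule.span ℝ (s : Set (Fin d → ℝ)) = ⊤
  swap
  · have : volume (convexHull ℝ (s : Set (Fin d → ℝ))) = 0 :=
      measure_mono_null (convexHull_min Submodule.subset_span (Submodule.convex _))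
        (Measure.addHaar_submodule _ _ hs)
    simp [this]
  obtain ⟨B, hBs, hB, hsub⟩ := exists_rows_mem_subset_image_cube s hs
  have hcube : volume (convexHull ℝ (s : Set (Fin d → ℝ))) ≤ ENNReal.ofReal (|B.det| * 2 ^ d) :=
    calc _ ≤ volume (toLin' Bᵀ '' Icc (-1) 1) :=
          measure_mono (convexHull_min hsub ((convex_Icc _ _).linear_image _))
      _ = ENNReal.ofReal (|B.det| * 2 ^ d) := by
          rw [Measure.addHaar_image_linearMap, LinearMap.det_toLin', det_transpose,
            Real.volume_Icc_pi, ENNReal.ofReal_mul (abs_nonneg _), ENNReal.ofReal_pow zero_le_two]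
          norm_num
  have hslabs : volume {q | ∀ y ∈ s, |q ⬝ᵥ y - c y| ≤ r} ≤
      ENNReal.ofReal (|B.det|⁻¹ * (2 * r) ^ d) :=
    calc _ ≤ volume (toLin' B ⁻¹' Icc (fun j => c (B j) - r) (fun j => c (B j) + r)) := by
          refine measure_mono fun q hq => ?_
          rw [← pi_univ_Icc, mem_preimage, mem_univ_pi]
          intro j
          rw [← mem_Icc_iff_abs_le, abs_sub_comm, toLin'_apply, mulVec, dotProduct_comm]
          exact hq (B j) (hBs j)
      _ = ENNReal.ofReal (|B.det|⁻¹ * (2 * r) ^ d) := by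
          rw [Measure.addHaar_preimage_linearMap _ (by rwa [LinearMap.det_toLin']),
            LinearMap.det_toLin', Real.volume_Icc_pi, abs_inv, ENNReal.ofReal_mul (by positivity),
            ENNReal.ofReal_pow (by positivity)]
          simp [two_mul]
  calc _ ≤ ENNReal.ofReal (|B.det| * 2 ^ d) * ENNReal.ofReal (|B.det|⁻¹ * (2 * r) ^ d) :=
        mul_le_mul' hcube hslabs
    _ = ENNReal.ofReal ((4 * r) ^ d) := by
        rw [← ENNReal.ofReal_mul (by positivity), mul_mul_mul_comm,
          mul_inv_cancel₀ (abs_ne_zero.mpr hB), one_mul, ← mul_pow, ← mul_assoc]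
        norm_num

theorem abs_le_card_mul_of_sum_eq_zero {ι K : Type*} [Field K] [LinearOrder K]
    [IsStrictOrderedRing K] {s : Finset ι} {g : ι → K} {M : K}
    (hsum : ∑ i ∈ s, g i = 0) (hg : ∀ i ∈ s, g i ≤ M) {i : ι} (hi : i ∈ s) :
    |g i| ≤ s.card * M := by
  classical
  have hcard : (1 : K) ≤ s.card := by exact_mod_cast Finset.card_pos.mpr ⟨i, hi⟩
  have hM : 0 ≤ M := by
    have := Finset.sum_le_card_nsmul s g M hg
    rw [hsum, nsmul_eq_mul] at this
    exact nonneg_of_mul_nonneg_right this (by linarith)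
  have hrest : ∑ j ∈ s.erase i, g j ≤ s.card * M :=
    calc ∑ j ∈ s.erase i, g j ≤ (s.erase i).card * M := by
          simpa using Finset.sum_le_card_nsmul (s.erase i) g M
            fun j hj => hg j (Finset.mem_of_mem_erase hj)
      _ ≤ s.card * M := by gcongr; exact Finset.erase_subset i s
  rw [← Finset.add_sum_erase s g hi] at hsum
  rw [abs_le]
  constructor <;> nlinarith [hg i hi]

theorem volume_shear_prod_Icc {E : Type*} [MeasureSpace E] [SFinite (volume : Measure E)]
    {I : Set E} (hI : MeasurableSet I) {φ : E → ℝ} (hφ : Measurable φ) (lo hi : ℝ) :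
    volume {w : E × ℝ | ∃ q ∈ I, ∃ s ∈ Icc lo hi, w = (q, s - φ q)} =
      volume I * ENNReal.ofReal (hi - lo) := by
  set S := {w : E × ℝ | ∃ q ∈ I, ∃ s ∈ Icc lo hi, w = (q, s - φ q)}
  have hS : S = Prod.fst ⁻¹' I ∩ (fun w => w.2 + φ w.1) ⁻¹' Icc lo hi := by
    ext ⟨q, t⟩
    constructor
    · rintro ⟨q, hq, s, hs, h⟩
      obtain ⟨rfl, rfl⟩ := Prod.mk.inj h
      exact ⟨hq, by simpa using hs⟩
    · rintro ⟨hq, ht⟩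
      exact ⟨q, hq, t + φ q, ht, by simp⟩
  have hSmeas : MeasurableSet S :=
    hS ▸ (hI.preimage measurable_fst).inter (measurableSet_Icc.preimage (by fun_prop))
  have hslice (q : E) :
      volume (Prod.mk q ⁻¹' S) = I.indicator (fun _ => ENNReal.ofReal (hi - lo)) q := by
    by_cases hq : q ∈ I
    · have : Prod.mk q ⁻¹' S = Icc (lo - φ q) (hi - φ q) := by
        ext t
        simp only [hS, mem_preimage, mem_inter_iff, hq, mem_Icc, true_and]
        constructor <;> rintro ⟨h₁, h₂⟩ <;> constructor <;> linarith
      rw [this, Real.volume_Icc, indicator_of_mem hq, sub_sub_sub_cancel_right]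
    · have : Prod.mk q ⁻¹' S = ∅ :=
        eq_empty_of_forall_notMem fun t ht => hq (by rw [hS] at ht; exact ht.1)
      rw [this, measure_empty, indicator_of_notMem hq]
  rw [Measure.volume_eq_prod, Measure.prod_apply hSmeas, lintegral_congr hslice,
    lintegral_indicator hI, setLIntegral_const, mul_comm]

section LocalEstimate

variable {d : ℕ} {U : Finset (Zd d)} {a : TEnv d} {D : Finset (Zd d × ℕ)} {u : Zd d × ℕ → ℝ}
  {p : Zd d × ℕ}

theorem IsBalancedEnv.nonneg (ha : IsBalancedEnv d U a) (n : ℕ) (x z : Zd d) : 0 ≤ a n x z := by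
  by_cases h : z ∈ U
  · exact ((ha n x).1 z h).le
  · exact ((ha n x).2.1 z h).ge

def jumpVec (a : TEnv d) (p : Zd d × ℕ) (z : Zd d) : Fin d → ℝ :=
  fun i => a p.2 p.1 z * z i

theorem dotProduct_jumpVec (q : Fin d → ℝ) (z : Zd d) :
    q ⬝ᵥ jumpVec a p z = a p.2 p.1 z * ∑ i, q i * z i := by
  simp only [dotProduct, jumpVec, Finset.mul_sum]
  exact Finset.sum_congr rfl fun i _ => by ring

theorem neg_Lop_eq_sum (ha : IsBalancedEnv d U a) (u : Zd d × ℕ → ℝ) (p : Zd d × ℕ)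
    (q : Fin d → ℝ) :
    -Lop d U a u p = ∑ z ∈ U, a p.2 p.1 z * (u p - u (p.1 + z, p.2 + 1) + ∑ i, q i * z i) := by
  obtain ⟨-, -, hsum, hbal⟩ := ha p.2 p.1
  have hdrift : ∑ z ∈ U, a p.2 p.1 z * ∑ i, q i * z i = 0 :=
    calc _ = ∑ i, q i * ∑ z ∈ U, (z i : ℝ) * a p.2 p.1 z := by
          simp only [Finset.mul_sum]
          rw [Finset.sum_comm]
          exact Finset.sum_congr rfl fun _ _ => Finset.sum_congr rfl fun _ _ => by ring
      _ = 0 := by simp [hbal]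
  simp only [Lop, mul_add, Finset.sum_add_distrib, hdrift, mul_sub, Finset.sum_sub_distrib,
    ← Finset.sum_mul, hsum]
  ring

theorem add_jump_mem_union_pBoundary (ha : IsBalancedEnv d U a) (hp : p ∈ D) {z : Zd d}
    (hz : z ∈ U) :
    (p.1 + z, p.2 + 1) ∈ (D : Set (Zd d × ℕ)) ∪ pBoundary d a D := by
  by_cases hD : (p.1 + z, p.2 + 1) ∈ D
  · exact Or.inl hD
  · exact Or.inr ⟨hD, p.1, p.2, hp, rfl, by simpa using (ha p.2 p.1).1 z hz⟩

theorem jump_slack_nonneg (ha : IsBalancedEnv d U a) (hp : p ∈ D) {q : Fin d → ℝ}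
    (hq : q ∈ Iset d a D u p) {z : Zd d} (hz : z ∈ U) :
    0 ≤ u p - u (p.1 + z, p.2 + 1) + ∑ i, q i * z i := by
  have := hq _ (add_jump_mem_union_pBoundary ha hp hz) (Nat.lt_succ_self _)
  simp only [Pi.add_apply, sub_add_cancel_left, Int.cast_neg, mul_neg,
    Finset.sum_neg_distrib] at this
  linarith

theorem jump_term_le (ha : IsBalancedEnv d U a) (hp : p ∈ D) {q : Fin d → ℝ}
    (hq : q ∈ Iset d a D u p) {z : Zd d} (hz : z ∈ U) :
    a p.2 p.1 z * (u p - u (p.1 + z, p.2 + 1) + ∑ i, q i * z i) ≤ max (-Lop d U a u p) 0 := by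
  refine le_max_of_le_left ?_
  rw [neg_Lop_eq_sum ha u p q]
  exact Finset.single_le_sum
    (fun w hw => mul_nonneg ((ha p.2 p.1).1 w hw).le (jump_slack_nonneg ha hp hq hw)) hz

theorem sub_next_time_le_div (ha : IsBalancedEnv d U a) (hp : p ∈ D) {q : Fin d → ℝ}
    (hq : q ∈ Iset d a D u p) (ha0 : 0 < a p.2 p.1 0) :
    u p - u (p.1, p.2 + 1) ≤ max (-Lop d U a u p) 0 / a p.2 p.1 0 := by
  have h0 : (0 : Zd d) ∈ U := by
    by_contra h
    exact ha0.ne' ((ha p.2 p.1).2.1 0 h)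
  have := jump_term_le ha hp hq h0
  simp only [add_zero, Pi.zero_apply, Int.cast_zero, mul_zero, Finset.sum_const_zero] at this
  rw [le_div_iff₀ ha0]
  linarith

/-- The weighted slacks of `q` and of `q₀` both sum to `-ℒ_a u(p)`, so their differences sum to
zero and each is at most `max (-ℒ_a u(p)) 0`. -/
theorem Iset_subset_slabs (ha : IsBalancedEnv d U a) (hp : p ∈ D) {q₀ : Fin d → ℝ}
    (hq₀ : q₀ ∈ Iset d a D u p) :
    Iset d a D u p ⊆ {q | ∀ z ∈ U, |q ⬝ᵥ jumpVec a p z - q₀ ⬝ᵥ jumpVec a p z| ≤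
      U.card * max (-Lop d U a u p) 0} := by
  intro q hq z hz
  let slack (q : Fin d → ℝ) (w : Zd d) :=
    a p.2 p.1 w * (u p - u (p.1 + w, p.2 + 1) + ∑ i, q i * w i)
  have hdiff : q ⬝ᵥ jumpVec a p z - q₀ ⬝ᵥ jumpVec a p z = slack q z - slack q₀ z := by
    simp only [slack, dotProduct_jumpVec]
    ring
  rw [hdiff]
  refine abs_le_card_mul_of_sum_eq_zero (g := fun w => slack q w - slack q₀ w) ?_
    (fun w hw => ?_) hz
  · rw [Finset.sum_sub_distrib, ← neg_Lop_eq_sum ha, ← neg_Lop_eq_sum ha, sub_self]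
  · have := mul_nonneg ((ha p.2 p.1).1 w hw).le (jump_slack_nonneg ha hp hq₀ hw)
    linarith [jump_term_le ha hp hq hw]

theorem isClosed_Iset : IsClosed (Iset d a D u p) := by
  simp only [Iset, ofPred_forall]
  exact isClosed_iInter fun r => isClosed_iInter fun _ => isClosed_iInter fun _ =>
    isClosed_le (by fun_prop) continuous_const

theorem volume_chi : volume (chi d a D u p) =
    volume (Iset d a D u p) * ENNReal.ofReal (u p - u (p.1, p.2 + 1)) :=
  volume_shear_prod_Icc isClosed_Iset.measurableSet (φ := fun q => ∑ i, (p.1 i : ℝ) * q i)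
    (by fun_prop) _ _

theorem volume_convexHull_mul_volume_Iset_le (ha : IsBalancedEnv d U a) (hp : p ∈ D)
    {q₀ : Fin d → ℝ} (hq₀ : q₀ ∈ Iset d a D u p) :
    volume (convexHull ℝ (Uxn d U a p)) * volume (Iset d a D u p) ≤
      ENNReal.ofReal ((4 * (U.card * max (-Lop d U a u p) 0)) ^ d) := by
  classical
  have hUxn : Uxn d U a p = ↑(U.image (jumpVec a p)) := by
    rw [Finset.coe_image]
    rfl
  have hslabs : Iset d a D u p ⊆ {q | ∀ y ∈ U.image (jumpVec a p), |q ⬝ᵥ y - q₀ ⬝ᵥ y| ≤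
      U.card * max (-Lop d U a u p) 0} := fun q hq => by
    simpa only [mem_ofPred_eq, Finset.forall_mem_image] using Iset_subset_slabs ha hp hq₀ hq
  rw [hUxn]
  exact (mul_le_mul' le_rfl (measure_mono hslabs)).trans
    (volume_convexHull_mul_volume_slabs_le _ _ (mul_nonneg (Nat.cast_nonneg _) (le_max_right _ _)))

theorem epsA_pow_succ (ha : IsBalancedEnv d U a) :
    epsA d U a p ^ (d + 1) =
      a p.2 p.1 0 * (volume (convexHull ℝ (Uxn d U a p))).toReal / U.card := by
  have := ha.nonneg p.2 p.1 0
  rw [epsA, ← Real.rpow_natCast, ← Real.rpow_mul (by positivity)]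
  push_cast
  rw [one_div_mul_cancel (by positivity), Real.rpow_one]

theorem pos_of_epsA_pos (ha : IsBalancedEnv d U a) (hε : 0 < epsA d U a p) :
    0 < a p.2 p.1 0 ∧ 0 < (volume (convexHull ℝ (Uxn d U a p))).toReal ∧ 1 ≤ (U.card : ℝ) := by
  obtain ⟨hav, hN⟩ : 0 < a p.2 p.1 0 * (volume (convexHull ℝ (Uxn d U a p))).toReal ∧
      0 < (U.card : ℝ) := by
    rcases div_pos_iff.mp (epsA_pow_succ ha ▸ pow_pos hε _) with h | ⟨-, h⟩
    · exact h
    · exact absurd h (Nat.cast_nonneg _).not_gt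
  have hv := pos_of_mul_pos_right hav (ha.nonneg _ _ _)
  exact ⟨pos_of_mul_pos_left hav hv.le, hv, Nat.one_le_cast.mpr (Nat.cast_pos.mp hN)⟩

theorem volume_chi_le (ha : IsBalancedEnv d U a) (hp : p ∈ D) (hε : 0 < epsA d U a p) :
    volume (chi d a D u p) ≤ ENNReal.ofReal
      (4 ^ d * U.card ^ d * (max (-Lop d U a u p) 0 / epsA d U a p) ^ (d + 1)) := by
  rcases (Iset d a D u p).eq_empty_or_nonempty with hI | ⟨q₀, hq₀⟩
  · simp [volume_chi, hI]
  obtain ⟨ha₀, hv, hN1⟩ := pos_of_epsA_pos ha hε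
  set M := max (-Lop d U a u p) 0
  set N := (U.card : ℝ)
  set a₀ := a p.2 p.1 0
  set v := (volume (convexHull ℝ (Uxn d U a p))).toReal
  have hεpow : epsA d U a p ^ (d + 1) = a₀ * v / N := epsA_pow_succ ha
  have hM : 0 ≤ M := le_max_right _ _
  have hN : 0 < N := one_pos.trans_le hN1
  have hvol : volume (convexHull ℝ (Uxn d U a p)) = ENNReal.ofReal v :=
    (ENNReal.ofReal_toReal (ENNReal.toReal_pos_iff.mp hv).2.ne).symm
  have hkey : (4 * (N * M)) ^ d * (M / a₀) ≤
      v * (4 ^ d * N ^ d * (M / epsA d U a p) ^ (d + 1)) :=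
    calc (4 * (N * M)) ^ d * (M / a₀) = 4 ^ d * N ^ d * M ^ (d + 1) / a₀ := by ring
      _ ≤ 4 ^ d * N ^ d * M ^ (d + 1) / a₀ * N :=
        le_mul_of_one_le_right (div_nonneg (mul_nonneg (mul_nonneg (pow_nonneg zero_le_four _)
          (pow_nonneg hN.le _)) (pow_nonneg hM _)) ha₀.le) hN1
      _ = v * (4 ^ d * N ^ d * (M / epsA d U a p) ^ (d + 1)) := by
        rw [div_pow, hεpow]
        field_simp
  rw [← ENNReal.mul_le_mul_iff_right (ENNReal.ofReal_pos.mpr hv).ne' ENNReal.ofReal_ne_top,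
    ← ENNReal.ofReal_mul hv.le, ← hvol]
  calc _ = volume (convexHull ℝ (Uxn d U a p)) * volume (Iset d a D u p) *
        ENNReal.ofReal (u p - u (p.1, p.2 + 1)) := by rw [volume_chi, mul_assoc]
    _ ≤ ENNReal.ofReal ((4 * (N * M)) ^ d) * ENNReal.ofReal (M / a₀) :=
        mul_le_mul' (volume_convexHull_mul_volume_Iset_le ha hp hq₀)
          (ENNReal.ofReal_le_ofReal (sub_next_time_le_div ha hp hq₀ ha₀))
    _ ≤ _ := by
        rw [← ENNReal.ofReal_mul (pow_nonneg (mul_nonneg zero_le_four (mul_nonneg hN.le hM)) d)]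
        exact ENNReal.ofReal_le_ofReal hkey

end LocalEstimate

theorem step3_chi_measure_bound (d : ℕ) :
    ∃ C : ℝ, 0 < C ∧
      ∀ (U : Finset (Zd d)), U.Nonempty →
      ∀ (a : TEnv d), IsBalancedEnv d U a →
      ∀ (D : Finset (Zd d × ℕ)) (u : Zd d × ℕ → ℝ) (R T : ℝ), 0 < R → 0 < T →
      (∀ q ∈ (D : Set (Zd d × ℕ)) ∪ pBoundary d a D,
        Real.sqrt (∑ i, (q.1 i : ℝ) ^ 2) ≤ R ∧ (q.2 : ℝ) ≤ T) →
      (∀ p ∈ D, 0 < epsA d U a p) →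
      ∀ x : Zd d,
        (volume (⋃ p ∈ {q ∈ GammaPlus d a D u R | q.1 = x}, chi d a D u p)).toReal ≤
          C * (U.card : ℝ) ^ d *
            ∑ q ∈ D, Set.indicator {r | r.1 = x ∧ r ∈ GammaPlus d a D u R}
              (fun r => (max (-(Lop d U a u r)) 0 / epsA d U a r) ^ (d + 1)) q := by
  refine ⟨4 ^ d, by positivity, fun U _ a ha D u R _ _ _ _ hε x => ?_⟩
  classical
  let bound (r : Zd d × ℕ) : ℝ :=
    4 ^ d * U.card ^ d * (max (-Lop d U a u r) 0 / epsA d U a r) ^ (d + 1)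
  let Γx := D.filter fun r => r.1 = x ∧ r ∈ GammaPlus d a D u R
  have hbound : ∀ r ∈ Γx, 0 ≤ bound r := fun r hr =>
    mul_nonneg (by positivity) (pow_nonneg (div_nonneg (le_max_right _ _)
      (hε r (Finset.mem_filter.mp hr).1).le) _)
  have hvol : volume (⋃ p ∈ {q ∈ GammaPlus d a D u R | q.1 = x}, chi d a D u p) ≤
      ENNReal.ofReal (∑ r ∈ Γx, bound r) :=
    calc _ ≤ volume (⋃ p ∈ Γx, chi d a D u p) :=
          measure_mono (biUnion_subset_biUnion_left fun r hr => by simp [Γx, hr.1.1, hr.1, hr.2])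
      _ ≤ ∑ r ∈ Γx, volume (chi d a D u r) := measure_biUnion_finset_le _ _
      _ ≤ ∑ r ∈ Γx, ENNReal.ofReal (bound r) := Finset.sum_le_sum fun r hr =>
          volume_chi_le ha (Finset.mem_filter.mp hr).1 (hε r (Finset.mem_filter.mp hr).1)
      _ = ENNReal.ofReal (∑ r ∈ Γx, bound r) := (ENNReal.ofReal_sum_of_nonneg hbound).symm
  refine (ENNReal.toReal_le_of_le_ofReal (Finset.sum_nonneg hbound) hvol).trans_eq ?_
  rw [Finset.sum_filter, Finset.mul_sum]
  exact Finset.sum_congr rfl fun r _ => by simp [bound, indicator_apply]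

end ParabolicMaxStep3
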